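/- Let p be an odd prime and n ≥ 1 with p^n ≡ 1 (mod 4) and χ(5) = −1, and let f(X) = X^{p^n−2} be the inverse function on F_{p^n}. Then the (−1)-differential spectrum of f satisfies ₋₁ω_0 = (p^n−5)/2, ₋₁ω_1 = 5, ₋₁ω_2 = (p^n−5)/2, and ₋₁ω_i = 0 for all i ≥ 3. -/

import Mathlib

open Finset

/-- The `c`-DDT entry of `f` at `(a, b)`:
the number of `x` with `f (x + a) - c * f x = b`. -/
def cDDT {F : Type*} [Field F] [Fintype F] [DecidableEq F]
    (f : F → F) (c a b : F) : ℕ :=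
  (Finset.univ.filter (fun x : F => f (x + a) - c * f x = b)).card

/-- The `c`-differential uniformity of `f`: the maximum of the `c`-DDT entries
over all `a, b`, where `a ≠ 0` is required when `c = 1`. -/
def cDU {F : Type*} [Field F] [Fintype F] [DecidableEq F]
    (f : F → F) (c : F) : ℕ :=
  (Finset.univ.filter (fun ab : F × F => c = 1 → ab.1 ≠ 0)).sup
    (fun ab => cDDT f c ab.1 ab.2)

/-- The classical differential uniformity of `f`. -/
def DU {F : Type*} [Field F] [Fintype F] [DecidableEq F] (f : F → F) : ℕ :=
  cDU f 1

/-- The BCT entry of `f` at `(a, b)`: the number of pairs `(x, y)` with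
`f x - f y = b` and `f (x + a) - f (y + a) = b`. -/
def BCT {F : Type*} [Field F] [Fintype F] [DecidableEq F]
    (f : F → F) (a b : F) : ℕ :=
  (Finset.univ.filter (fun xy : F × F =>
    f xy.1 - f xy.2 = b ∧ f (xy.1 + a) - f (xy.2 + a) = b)).card

/-- The boomerang uniformity of `f`: the maximum of the BCT entries over all
nonzero `a, b`. -/
def BU {F : Type*} [Field F] [Fintype F] [DecidableEq F] (f : F → F) : ℕ :=
  (Finset.univ.filter (fun ab : F × F => ab.1 ≠ 0 ∧ ab.2 ≠ 0)).sup
    (fun ab => BCT f ab.1 ab.2)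

/-- The quadratic character: `χ 0 = 0`, `χ α = 1` if `α` is a nonzero square,
and `χ α = -1` otherwise. -/
noncomputable def chi {F : Type*} [Field F] (α : F) : ℤ :=
  letI := Classical.dec (α = 0)
  letI := Classical.dec (IsSquare α)
  if α = 0 then 0 else if IsSquare α then 1 else -1

/-- The `c`-differential spectrum entry `ω_i` of a power function:
the number of `b` with `cΔ_f(1, b) = i`. -/
def omegaSpec {F : Type*} [Field F] [Fintype F] [DecidableEq F]
    (f : F → F) (c : F) (i : ℕ) : ℕ :=
  (Finset.univ.filter (fun b : F => cDDT f c 1 b = i)).card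

/-- The boomerang spectrum entry `v_i` of a power function:
the number of nonzero `b` with `B_f(1, b) = i`. -/
def vSpec {F : Type*} [Field F] [Fintype F] [DecidableEq F]
    (f : F → F) (i : ℕ) : ℕ :=
  (Finset.univ.filter (fun b : F => b ≠ 0 ∧ BCT f 1 b = i)).card

/-! For `f x = x⁻¹` the equation `f (x + 1) + f x = b` has the extra solution `x = 0` when
`b = 1` and `x = -1` when `b = -1`; all its other solutions are the roots of
`b x² + (b - 2) x - 1`, of discriminant `b² + 4`. For `b = ±1` that is the nonsquare `5`, and for
`b = 0` the equation is linear, so `b ∈ {0, 1, -1}` have exactly one solution each, while any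
other `b` has at most two, and exactly one iff `b² = -4`. Since `-1` is a square when
`q ≡ 1 (mod 4)`, exactly five `b` have one solution and the others have none or two; counting the
`b` and the `q` solutions in total gives the spectrum. -/

section Quadratic

variable {K : Type*} [Field K] [Fintype K] [DecidableEq K] [NeZero (2 : K)] {a b c : K}

theorem card_quadratic_roots_le_two (ha : a ≠ 0) :
    #{x | a * (x * x) + b * x + c = 0} ≤ 2 := by
  by_cases hd : ∃ s, discrim a b c = s * s
  · obtain ⟨s, hs⟩ := hd
    calc #{x | a * (x * x) + b * x + c = 0}
        ≤ #{(-b + s) / (2 * a), (-b - s) / (2 * a)} :=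
          card_le_card fun x hx => by simpa [quadratic_eq_zero_iff ha hs] using hx
      _ ≤ 2 := card_le_two
  · simp only [not_exists] at hd
    have hroots : ∀ x, a * (x * x) + b * x + c ≠ 0 :=
      quadratic_ne_zero_of_discrim_ne_sq fun s => by simpa [sq] using hd s
    simp [hroots]

theorem card_quadratic_roots_eq_one_iff (ha : a ≠ 0) :
    #{x | a * (x * x) + b * x + c = 0} = 1 ↔ discrim a b c = 0 := by
  simp [card_eq_one_iff_existsUnique, discrim_eq_zero_iff ha]

end Quadratic

section Counting

variable {β : Type*} [Fintype β] {N : β → ℕ}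

theorem card_eq_card_filter_eq_zero_add_one_add_two (h : ∀ b, N b ≤ 2) :
    Fintype.card β = #{b | N b = 0} + #{b | N b = 1} + #{b | N b = 2} := by
  rw [← card_univ, card_eq_sum_ones, card_filter, card_filter, card_filter,
    ← sum_add_distrib, ← sum_add_distrib]
  refine sum_congr rfl fun b _ => ?_
  have := h b
  split_ifs <;> omega

theorem sum_eq_card_filter_eq_one_add_two_mul (h : ∀ b, N b ≤ 2) :
    ∑ b, N b = #{b | N b = 1} + 2 * #{b | N b = 2} := by
  rw [card_filter, card_filter, mul_sum, ← sum_add_distrib]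
  refine sum_congr rfl fun b _ => ?_
  have := h b
  split_ifs <;> omega

end Counting

theorem FiniteField.pow_card_sub_two_eq_inv {F : Type*} [Field F] [Fintype F]
    (hq : 2 < Fintype.card F) (x : F) : x ^ (Fintype.card F - 2) = x⁻¹ := by
  rcases eq_or_ne x 0 with rfl | hx
  · simp [zero_pow (Nat.sub_ne_zero_of_lt hq)]
  · refine eq_inv_of_mul_eq_one_left ?_
    rw [← pow_succ, show Fintype.card F - 2 + 1 = Fintype.card F - 1 by omega]
    exact FiniteField.pow_card_sub_one_eq_one x hx

theorem not_isSquare_of_chi_eq_neg_one {F : Type*} [Field F] {α : F} (h : chi α = -1) :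
    ¬ IsSquare α := by
  unfold chi at h
  split_ifs at h with _ hsq
  exact hsq

theorem sum_cDDT {F : Type*} [Field F] [Fintype F] [DecidableEq F] (f : F → F) (c a : F) :
    ∑ b, cDDT f c a b = Fintype.card F :=
  (card_eq_sum_card_fiberwise fun _ _ => mem_univ _).symm

theorem card_filter_eq_zero_or_eq_one_or_eq_neg_one_or_sq_add_four_eq_zero
    {F : Type*} [Field F] [Fintype F] [DecidableEq F] [NeZero (2 : F)]
    (h5 : (5 : F) ≠ 0) (hneg : IsSquare (-1 : F)) :
    #{b : F | b = 0 ∨ b = 1 ∨ b = -1 ∨ b ^ 2 + 4 = 0} = 5 := by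
  obtain ⟨i, hi⟩ := hneg
  have hr : (2 * i) ^ 2 + 4 = 0 := by linear_combination -4 * hi
  have hsqrt : ∀ b : F, b ^ 2 + 4 = 0 ↔ b = 2 * i ∨ b = -(2 * i) := fun b => by
    rw [← sub_eq_zero (b := -(2 * i)), ← sub_eq_zero (b := 2 * i), ← mul_eq_zero]
    exact ⟨fun h => by linear_combination h - hr, fun h => by linear_combination h + hr⟩
  have hi0 : i ≠ 0 := by rintro rfl; simp at hi
  have hr1 : 2 * i ≠ 1 := fun h => h5 (by linear_combination hr - (2 * i + 1) * h)
  have hrm1 : 2 * i ≠ -1 := fun h => h5 (by linear_combination hr - (2 * i - 1) * h)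
  have hr0 : 2 * i ≠ 0 := mul_ne_zero two_ne_zero hi0
  have hrr : 2 * i ≠ -(2 * i) := fun h => mul_ne_zero two_ne_zero hr0 (by linear_combination h)
  have h11 : (1 : F) ≠ -1 := fun h => two_ne_zero' F (by linear_combination h)
  have h1r : (1 : F) ≠ -(2 * i) := fun h => hrm1 (by linear_combination h)
  have hset : ({b | b = 0 ∨ b = 1 ∨ b = -1 ∨ b ^ 2 + 4 = 0} : Finset F)
      = {0, 1, -1, 2 * i, -(2 * i)} := by
    ext b; simp [hsqrt]
  rw [hset]
  repeat rw [card_insert_of_notMem]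
  all_goals simp [two_ne_zero' F, hi0, hr1.symm, hrm1.symm, hrr, h11, h1r]

theorem inv_add_one_add_inv_eq_iff {F : Type*} [Field F] {x : F} (hx : x ≠ 0) (hx1 : x + 1 ≠ 0)
    (b : F) :
    (x + 1)⁻¹ + x⁻¹ = b ↔ b * (x * x) + (b - 2) * x + -1 = 0 := by
  field_simp
  constructor <;> intro h <;> linear_combination -h

section InverseFunction

variable {F : Type*} [Field F] [Fintype F] [DecidableEq F]

theorem cDDT_inv_neg_one (b : F) : cDDT (·⁻¹) (-1) 1 b = #{x : F | (x + 1)⁻¹ + x⁻¹ = b} := by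
  simp [cDDT]

theorem card_inv_add_one_add_inv_eq_card_quadratic_roots {b : F} (hb1 : b ≠ 1) (hb : b ≠ -1) :
    #{x : F | (x + 1)⁻¹ + x⁻¹ = b} = #{x | b * (x * x) + (b - 2) * x + -1 = 0} := by
  refine congrArg card (filter_congr fun x _ => ?_)
  rcases eq_or_ne x 0 with rfl | hx
  · simp [Ne.symm hb1]
  rcases eq_or_ne (x + 1) 0 with hx1 | hx1
  · obtain rfl : x = -1 := eq_neg_of_add_eq_zero_left hx1
    norm_num [Ne.symm hb]
  exact inv_add_one_add_inv_eq_iff hx hx1 b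

theorem card_inv_add_one_add_inv_eq_neg (b : F) :
    #{x : F | (x + 1)⁻¹ + x⁻¹ = -b} = #{x : F | (x + 1)⁻¹ + x⁻¹ = b} := by
  have key : ∀ x : F, (-1 - x + 1)⁻¹ + (-1 - x)⁻¹ = -((x + 1)⁻¹ + x⁻¹) := fun x => by
    rw [show -1 - x + 1 = -x by ring, show -1 - x = -(x + 1) by ring, inv_neg, inv_neg]; ring
  refine card_nbij' (fun x => -1 - x) (fun x => -1 - x) ?_ ?_ ?_ ?_ <;> intro x hx
  · simp only [coe_filter, mem_univ, true_and, Set.mem_ofPred_eq] at hx ⊢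
    rw [key, hx, neg_neg]
  · simp only [coe_filter, mem_univ, true_and, Set.mem_ofPred_eq] at hx ⊢
    rw [key, hx]
  · simp
  · simp

variable [NeZero (2 : F)]

theorem card_inv_add_one_add_inv_eq_zero :
    #{x : F | (x + 1)⁻¹ + x⁻¹ = 0} = 1 := by
  rw [card_inv_add_one_add_inv_eq_card_quadratic_roots (by simp) (by simp),
    card_eq_one_iff_existsUnique]
  refine ⟨-2⁻¹, by simp [mul_inv_cancel₀ (two_ne_zero' F)], fun y hy => ?_⟩
  simp only [mem_filter, mem_univ, true_and] at hy
  field_simp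
  linear_combination -hy

variable (h5 : ¬ IsSquare (5 : F))
include h5

theorem card_inv_add_one_add_inv_eq_one :
    #{x : F | (x + 1)⁻¹ + x⁻¹ = 1} = 1 := by
  rw [card_eq_one_iff_existsUnique]
  refine ⟨0, by simp, fun y hy => ?_⟩
  simp only [mem_filter, mem_univ, true_and] at hy
  by_contra hy0
  rcases eq_or_ne (y + 1) 0 with hy1 | hy1
  · obtain rfl := eq_neg_of_add_eq_zero_left hy1
    norm_num at hy
    exact two_ne_zero' F (by linear_combination -hy)
  rw [inv_add_one_add_inv_eq_iff hy0 hy1] at hy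
  refine quadratic_ne_zero_of_discrim_ne_sq (fun s hs => h5 ⟨s, ?_⟩) y hy
  rw [← sq, ← hs, discrim]; norm_num

theorem card_inv_add_one_add_inv_eq_of_mem {b : F} (hb : b = 0 ∨ b = 1 ∨ b = -1) :
    #{x : F | (x + 1)⁻¹ + x⁻¹ = b} = 1 := by
  rcases hb with rfl | rfl | rfl
  · exact card_inv_add_one_add_inv_eq_zero
  · exact card_inv_add_one_add_inv_eq_one h5
  · rw [card_inv_add_one_add_inv_eq_neg, card_inv_add_one_add_inv_eq_one h5]

theorem cDDT_inv_neg_one_le_two (b : F) : cDDT (·⁻¹) (-1) 1 b ≤ 2 := by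
  rw [cDDT_inv_neg_one]
  by_cases hb : b = 0 ∨ b = 1 ∨ b = -1
  · rw [card_inv_add_one_add_inv_eq_of_mem h5 hb]; norm_num
  · push Not at hb
    rw [card_inv_add_one_add_inv_eq_card_quadratic_roots hb.2.1 hb.2.2]
    exact card_quadratic_roots_le_two hb.1

theorem cDDT_inv_neg_one_eq_one_iff (b : F) :
    cDDT (·⁻¹) (-1) 1 b = 1 ↔ b = 0 ∨ b = 1 ∨ b = -1 ∨ b ^ 2 + 4 = 0 := by
  rw [cDDT_inv_neg_one]
  by_cases hb : b = 0 ∨ b = 1 ∨ b = -1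
  · simp only [card_inv_add_one_add_inv_eq_of_mem h5 hb, true_iff]
    tauto
  · push Not at hb
    rw [card_inv_add_one_add_inv_eq_card_quadratic_roots hb.2.1 hb.2.2,
      card_quadratic_roots_eq_one_iff hb.1, discrim]
    simp only [hb, false_or]
    ring_nf

end InverseFunction

theorem neg_one_spectrum_inverse_one_mod_four_chi_five_neg_one_general (p n : ℕ)
    {F : Type*} [Field F] [Fintype F] [DecidableEq F]
    (hF : Fintype.card F = p ^ n)
    (hmod : p ^ n % 4 = 1) (hchi : chi (5 : F) = -1)
    (f : F → F) (hf : ∀ x : F, f x = x ^ (p ^ n - 2)) :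
    omegaSpec f (-1) 0 = (p ^ n - 5) / 2 ∧ omegaSpec f (-1) 1 = 5 ∧
    omegaSpec f (-1) 2 = (p ^ n - 5) / 2 ∧
    ∀ i : ℕ, 3 ≤ i → omegaSpec f (-1) i = 0 := by
  have hq : 2 < Fintype.card F := by
    have := Fintype.one_lt_card (α := F)
    omega
  have : NeZero (2 : F) := ⟨Ring.two_ne_zero fun h => by
    have := FiniteField.even_card_iff_char_two.mp h
    omega⟩
  have h5 := not_isSquare_of_chi_eq_neg_one hchi
  obtain rfl : f = (·⁻¹) := funext fun x => by
    rw [hf, ← hF, FiniteField.pow_card_sub_two_eq_inv hq]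
  have hle : ∀ b, cDDT (·⁻¹) (-1 : F) 1 b ≤ 2 := cDDT_inv_neg_one_le_two h5
  have hone : #{b | cDDT (·⁻¹) (-1 : F) 1 b = 1} = 5 := by
    rw [filter_congr fun b _ => cDDT_inv_neg_one_eq_one_iff h5 b]
    exact card_filter_eq_zero_or_eq_one_or_eq_neg_one_or_sq_add_four_eq_zero
      (fun h => h5 (h ▸ ⟨0, by ring⟩)) (FiniteField.isSquare_neg_one_iff.mpr (by omega))
  have hsum := sum_cDDT (·⁻¹) (-1 : F) 1
  have hcard := card_eq_card_filter_eq_zero_add_one_add_two hle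
  rw [sum_eq_card_filter_eq_one_add_two_mul hle] at hsum
  simp only [omegaSpec]
  refine ⟨by omega, hone, by omega, fun i hi => card_eq_zero.mpr ?_⟩
  exact filter_eq_empty_iff.mpr fun b _ => by have := hle b; omega

theorem neg_one_spectrum_inverse_one_mod_four_chi_five_neg_one (p n : ℕ) (hp : p.Prime) (hpodd : Odd p) (hn : 1 ≤ n)
    {F : Type*} [Field F] [Fintype F] [DecidableEq F]
    (hF : Fintype.card F = p ^ n)
    (hmod : p ^ n % 4 = 1) (hchi : chi (5 : F) = -1)
    (f : F → F) (hf : ∀ x : F, f x = x ^ (p ^ n - 2)) :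
    omegaSpec f (-1) 0 = (p ^ n - 5) / 2 ∧ omegaSpec f (-1) 1 = 5 ∧
    omegaSpec f (-1) 2 = (p ^ n - 5) / 2 ∧
    ∀ i : ℕ, 3 ≤ i → omegaSpec f (-1) i = 0 :=
  neg_one_spectrum_inverse_one_mod_four_chi_five_neg_one_general p n hF hmod hchi f hf
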